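/- Fix n ≥ 1, ε ∈ (0,1], a probability distribution ν on {0,1}^n, and functions f_1,…,f_t : {0,1}^n → [0,1]. Define the mirror descent iterates μ_0 = U (the uniform distribution on {0,1}^n) and, for 1 ≤ s ≤ t, μ_s(x) = exp(−(ε/4)·Σ_{i=1}^{s} f_i(x)) / Z_s with Z_s = Σ_{x∈{0,1}^n} exp(−(ε/4)·Σ_{i=1}^{s} f_i(x)). Suppose that for every 1 ≤ i ≤ t the function f_i distinguishes the previous iterate from ν, i.e. E_{μ_{i−1}}[f_i] − E_ν[f_i] ≥ ε. Then D(ν‖μ_t) ≤ D(ν‖U) − t·ε²/16. -/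
import Mathlib


open Finset

noncomputable section

/-- Expectation of `f` under a distribution `μ` on a finite type. -/
def expect {S : Type*} [Fintype S] (μ f : S → ℝ) : ℝ := ∑ x, μ x * f x

/-- Relative entropy (KL divergence, natural logarithm). -/
def klDiv {S : Type*} [Fintype S] (ν μ : S → ℝ) : ℝ := ∑ x, ν x * Real.log (ν x / μ x)

/-- `μ` is a probability distribution on the finite type `S`. -/
def IsProbDist {S : Type*} [Fintype S] (μ : S → ℝ) : Prop :=
  (∀ x, 0 ≤ μ x) ∧ ∑ x, μ x = 1

/-- The uniform distribution on `{0,1}^n`. -/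
def uniformBn (n : ℕ) : (Fin n → Bool) → ℝ := fun _ => ((2 : ℝ) ^ n)⁻¹

/-- The `s`-th mirror descent iterate: the Gibbs distribution
`μ_s(x) = exp(-(ε/4)·∑_{i<s} f_i(x)) / Z_s`.  For `s = 0` this is the uniform
distribution on `{0,1}^n`. -/
def mdIter (n : ℕ) (ε : ℝ) (f : ℕ → (Fin n → Bool) → ℝ) (s : ℕ) :
    (Fin n → Bool) → ℝ :=
  fun x => Real.exp (-(ε / 4) * ∑ i ∈ Finset.range s, f i x) /
    ∑ y, Real.exp (-(ε / 4) * ∑ i ∈ Finset.range s, f i y)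

lemma exp_neg_le_quad {a : ℝ} (ha : 0 ≤ a) :
    Real.exp (-a) ≤ 1 - a + a ^ 2 := by
  have h1 : (1:ℝ) + a ≤ Real.exp a := by have := Real.add_one_le_exp a; linarith
  have h2 : Real.exp (-a) * Real.exp a = 1 := by rw [← Real.exp_add]; simp
  have h3 : 0 < Real.exp (-a) := Real.exp_pos _
  nlinarith [mul_le_mul_of_nonneg_left h1 h3.le]

lemma mdIter_pos (n : ℕ) (ε : ℝ) (f : ℕ → (Fin n → Bool) → ℝ) (s : ℕ) (x : Fin n → Bool) :
    0 < mdIter n ε f s x :=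
  div_pos (Real.exp_pos _) (Finset.sum_pos (fun _ _ => Real.exp_pos _) Finset.univ_nonempty)

lemma mdIter_sum (n : ℕ) (ε : ℝ) (f : ℕ → (Fin n → Bool) → ℝ) (s : ℕ) :
    ∑ x, mdIter n ε f s x = 1 := by
  unfold mdIter
  rw [← Finset.sum_div, div_self]
  exact ne_of_gt (Finset.sum_pos (fun _ _ => Real.exp_pos _) Finset.univ_nonempty)

lemma md_step (n : ℕ) (ε : ℝ) (hε0 : 0 < ε)
    (ν : (Fin n → Bool) → ℝ) (hν : IsProbDist ν)
    (f : ℕ → (Fin n → Bool) → ℝ) (s : ℕ)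
    (hf : ∀ x, f s x ∈ Set.Icc (0:ℝ) 1)
    (hsep : expect (mdIter n ε f s) (f s) - expect ν (f s) ≥ ε) :
    klDiv ν (mdIter n ε f (s+1)) ≤ klDiv ν (mdIter n ε f s) - ε^2/16 := by
  set A : ℝ := ∑ x, mdIter n ε f s x * Real.exp (-(ε/4) * f s x) with hA
  have hApos : 0 < A :=
    Finset.sum_pos (fun x _ => mul_pos (mdIter_pos n ε f s x) (Real.exp_pos _))
      Finset.univ_nonempty
  -- μ_{s+1} x = μ_s x * exp(-(ε/4) f s x) / A
  have hZpos : (0:ℝ) < ∑ y, Real.exp (-(ε/4) * ∑ i ∈ Finset.range s, f i y) :=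
    Finset.sum_pos (fun _ _ => Real.exp_pos _) Finset.univ_nonempty
  have hZmul : (∑ y, Real.exp (-(ε/4) * ∑ i ∈ Finset.range (s+1), f i y))
      = (∑ y, Real.exp (-(ε/4) * ∑ i ∈ Finset.range s, f i y)) * A := by
    rw [hA, Finset.mul_sum]
    refine Finset.sum_congr rfl fun x _ => ?_
    unfold mdIter
    rw [Finset.sum_range_succ, mul_add, Real.exp_add]
    field_simp
  have key : ∀ x, mdIter n ε f (s+1) x
      = mdIter n ε f s x * Real.exp (-(ε/4) * f s x) / A := by
    intro x
    unfold mdIter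
    rw [hZmul, Finset.sum_range_succ, mul_add, Real.exp_add]
    field_simp
  -- KL identity
  have hkl : klDiv ν (mdIter n ε f (s+1))
      = klDiv ν (mdIter n ε f s) + (ε/4) * expect ν (f s) + Real.log A := by
    unfold klDiv
    have hterm : ∀ x, ν x * Real.log (ν x / mdIter n ε f (s+1) x)
        = ν x * Real.log (ν x / mdIter n ε f s x) + (ε/4) * (ν x * f s x)
          + ν x * Real.log A := by
      intro x
      rcases eq_or_lt_of_le (hν.1 x) with h0 | h0
      · simp [← h0]
      · have hμpos := mdIter_pos n ε f s x
        rw [key x, div_div_eq_mul_div,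
          Real.log_div (ne_of_gt (mul_pos h0 hApos))
            (ne_of_gt (mul_pos hμpos (Real.exp_pos _))),
          Real.log_mul (ne_of_gt h0) (ne_of_gt hApos),
          Real.log_mul (ne_of_gt hμpos) (ne_of_gt (Real.exp_pos _)),
          Real.log_exp, Real.log_div (ne_of_gt h0) (ne_of_gt hμpos)]
        ring
    rw [Finset.sum_congr rfl fun x _ => hterm x, Finset.sum_add_distrib,
      Finset.sum_add_distrib, ← Finset.mul_sum, ← Finset.sum_mul, hν.2]
    unfold _root_.expect
    ring
  -- bound on A
  have hAle : A ≤ 1 - (ε/4) * expect (mdIter n ε f s) (f s) + (ε/4)^2 := by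
    have h1 : A ≤ ∑ x, mdIter n ε f s x *
        (1 - (ε/4) * f s x + ((ε/4) * f s x)^2) := by
      refine Finset.sum_le_sum fun x _ => ?_
      refine mul_le_mul_of_nonneg_left ?_ (mdIter_pos n ε f s x).le
      have h := exp_neg_le_quad (a := (ε/4) * f s x)
        (mul_nonneg (by positivity) (hf x).1)
      rw [neg_mul]
      exact h
    have h2 : ∑ x, mdIter n ε f s x * (1 - (ε/4) * f s x + ((ε/4) * f s x)^2)
        = 1 - (ε/4) * expect (mdIter n ε f s) (f s)
          + (ε/4)^2 * ∑ x, mdIter n ε f s x * (f s x)^2 := by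
      have e : ∀ x, mdIter n ε f s x * (1 - (ε/4) * f s x + ((ε/4) * f s x)^2)
          = mdIter n ε f s x - (ε/4) * (mdIter n ε f s x * f s x)
            + (ε/4)^2 * (mdIter n ε f s x * (f s x)^2) := fun x => by ring
      rw [Finset.sum_congr rfl fun x _ => e x, Finset.sum_add_distrib,
        Finset.sum_sub_distrib, ← Finset.mul_sum, ← Finset.mul_sum,
        mdIter_sum n ε f s]
      rfl
    have h3 : ∑ x, mdIter n ε f s x * (f s x)^2 ≤ 1 := by
      calc ∑ x, mdIter n ε f s x * (f s x)^2
          ≤ ∑ x, mdIter n ε f s x := by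
            refine Finset.sum_le_sum fun x _ => ?_
            have hx := hf x
            have hsq : f s x ^ 2 ≤ 1 := by nlinarith [hx.1, hx.2]
            calc mdIter n ε f s x * f s x ^ 2
                ≤ mdIter n ε f s x * 1 :=
                  mul_le_mul_of_nonneg_left hsq (mdIter_pos n ε f s x).le
              _ = mdIter n ε f s x := mul_one _
        _ = 1 := mdIter_sum n ε f s
    nlinarith [sq_nonneg (ε/4)]
  have hlog : Real.log A ≤ A - 1 := Real.log_le_sub_one_of_pos hApos
  rw [hkl]
  nlinarith [mul_le_mul_of_nonneg_left hsep (by positivity : (0:ℝ) ≤ ε/4)]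

lemma mdIter_zero (n : ℕ) (ε : ℝ) (f : ℕ → (Fin n → Bool) → ℝ) :
    mdIter n ε f 0 = uniformBn n := by
  funext x
  simp [mdIter, uniformBn, Finset.card_univ, one_div]


/-- Convergence lemma for mirror descent: if each `f i` distinguishes the previous
iterate from `ν` by at least `ε`, then the relative entropy decreases by `ε²/16`
per round. -/
theorem mirror_descent_convergence (n : ℕ) (hn : 1 ≤ n)
    (ε : ℝ) (hε : ε ∈ Set.Ioc (0 : ℝ) 1)
    (ν : (Fin n → Bool) → ℝ) (hν : IsProbDist ν)
    (t : ℕ) (f : ℕ → (Fin n → Bool) → ℝ)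
    (hf : ∀ i < t, ∀ x, f i x ∈ Set.Icc (0 : ℝ) 1)
    (hsep : ∀ i < t, expect (mdIter n ε f i) (f i) - expect ν (f i) ≥ ε) :
    klDiv ν (mdIter n ε f t) ≤ klDiv ν (uniformBn n) - t * ε ^ 2 / 16 := by
    induction t with
  | zero => simp [mdIter_zero]
  | succ t ih =>
    have ih' := ih (fun i hi => hf i (Nat.lt_succ_of_lt hi))
      (fun i hi => hsep i (Nat.lt_succ_of_lt hi))
    have hstep := md_step n ε hε.1 ν hν f t
      (hf t (Nat.lt_succ_self t)) (hsep t (Nat.lt_succ_self t))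
    push_cast
    push_cast at ih'
    linarith
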